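/- Let g be an entire function on ℂ with |g(z)| ≤ 1 for all z in the closed upper half plane {z ∈ ℂ : Im z ≥ 0}. Then for every x ∈ ℝ and y > 0, log|g(x+iy)| ≤ (1/π) ∫_ℝ y log|g(t)| / (y² + (x−t)²) dt, where the integral is taken in [−∞, ∞). -/

import Mathlib

open MeasureTheory

/-- `negLog r` is `-log r` viewed as an element of `[0,∞]`, with the convention
`negLog 0 = ∞`.  For `0 ≤ r ≤ 1` this faithfully represents the value
`log r ∈ [-∞, 0]` (negated). -/
noncomputable def negLog (r : ℝ) : ENNReal :=
  if r = 0 then ⊤ else ENNReal.ofReal (-Real.log r)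

/-!
For a continuous compactly supported `w ≥ 0` with `‖g t‖ ≤ exp (-w t)` on `ℝ`, the Cauchy transform
`F z = ∫ w t / (t - z) dt` is holomorphic in the upper half plane and `Im F` is the Poisson integral
of `w`. The function `exp (-i F (z + iε) / π) g z` is bounded on the closed upper half plane and,
since the Poisson integral at height `ε` converges uniformly to `w`, has modulus at most `exp η` on
`ℝ`; by Phragmén–Lindelöf it is bounded by `exp η` everywhere, and letting `ε, η → 0` gives
`log ‖g z‖ ≤ -Im F z / π`. Finally `-log ‖g‖` on `ℝ` is an increasing limit of such `w`, and
monotone convergence gives the theorem.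
-/

open Complex Filter Topology Set
open scoped Real ENNReal

noncomputable section

/-- The Poisson kernel of the upper half plane without its factor `1 / π`, so that its total mass
is `π`. -/
def halfPlanePoissonKernel (z : ℂ) (t : ℝ) : ℝ := z.im / (z.im ^ 2 + (z.re - t) ^ 2)

section PoissonKernel

variable {z : ℂ}

lemma halfPlanePoissonKernel_nonneg (hz : 0 ≤ z.im) (t : ℝ) : 0 ≤ halfPlanePoissonKernel z t := by
  unfold halfPlanePoissonKernel; positivity

lemma halfPlanePoissonKernel_eq (hz : 0 < z.im) (t : ℝ) :
    halfPlanePoissonKernel z t = z.im⁻¹ * (1 + ((t - z.re) / z.im) ^ 2)⁻¹ := by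
  unfold halfPlanePoissonKernel
  field_simp
  ring

lemma continuous_halfPlanePoissonKernel (hz : 0 < z.im) : Continuous (halfPlanePoissonKernel z) :=
  continuous_const.div (by fun_prop) fun t => by positivity

lemma integrable_halfPlanePoissonKernel (hz : 0 < z.im) :
    Integrable (halfPlanePoissonKernel z) := by
  rw [funext (halfPlanePoissonKernel_eq hz)]
  exact ((integrable_inv_one_add_sq.comp_div hz.ne').comp_sub_right z.re).const_mul _

lemma integral_halfPlanePoissonKernel (hz : 0 < z.im) : ∫ t, halfPlanePoissonKernel z t = π := by
  simp_rw [halfPlanePoissonKernel_eq hz, integral_const_mul,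
    integral_sub_right_eq_self (fun t => (1 + (t / z.im) ^ 2)⁻¹),
    Measure.integral_comp_div (fun t => (1 + t ^ 2)⁻¹), integral_univ_inv_one_add_sq, smul_eq_mul,
    abs_of_pos hz]
  field_simp

lemma halfPlanePoissonKernel_le_of_le_abs (hz : 0 ≤ z.im) {t δ : ℝ} (hδ : 0 < δ)
    (h : δ ≤ |z.re - t|) : halfPlanePoissonKernel z t ≤ z.im / δ ^ 2 := by
  unfold halfPlanePoissonKernel
  have : δ ^ 2 ≤ (z.re - t) ^ 2 := by
    rw [← sq_abs (z.re - t)]; exact pow_le_pow_left₀ hδ.le h 2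
  exact div_le_div_of_nonneg_left hz (by positivity) (by nlinarith)

lemma im_inv_ofReal_sub (z : ℂ) (t : ℝ) : ((t : ℂ) - z)⁻¹.im = halfPlanePoissonKernel z t := by
  rw [inv_im, normSq_apply, halfPlanePoissonKernel]
  simp only [sub_re, sub_im, ofReal_re, ofReal_im]
  congr 1 <;> ring

end PoissonKernel

/-- Normalised without the factor `1 / (2πi)`, so that its imaginary part is the Poisson integral
of `w`. -/
def cauchyTransform (w : ℝ → ℝ) (z : ℂ) : ℂ := ∫ t, (w t : ℂ) * ((t : ℂ) - z)⁻¹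

section CauchyTransform

variable {w : ℝ → ℝ} {z : ℂ}

lemma im_le_norm_ofReal_sub (z : ℂ) (t : ℝ) : z.im ≤ ‖(t : ℂ) - z‖ := by
  simpa using (neg_le_abs _).trans (abs_im_le_norm ((t : ℂ) - z))

lemma norm_inv_ofReal_sub_le (hz : 0 < z.im) (t : ℝ) : ‖((t : ℂ) - z)⁻¹‖ ≤ z.im⁻¹ := by
  rw [norm_inv]
  exact inv_anti₀ hz (im_le_norm_ofReal_sub z t)

lemma integrable_mul_inv_ofReal_sub (hw : Integrable w) (hz : 0 < z.im) :
    Integrable fun t : ℝ => (w t : ℂ) * ((t : ℂ) - z)⁻¹ :=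
  hw.ofReal.mul_bdd (by fun_prop) (.of_forall (norm_inv_ofReal_sub_le hz))

lemma im_cauchyTransform (hw : Integrable w) (hz : 0 < z.im) :
    (cauchyTransform w z).im = ∫ t, w t * halfPlanePoissonKernel z t := by
  rw [cauchyTransform, ← imCLM_apply,
    ← imCLM.integral_comp_comm (integrable_mul_inv_ofReal_sub hw hz)]
  simp only [imCLM_apply, mul_im, ofReal_re, ofReal_im, zero_mul, add_zero, im_inv_ofReal_sub]

lemma differentiableOn_cauchyTransform (hw : Integrable w) :
    DifferentiableOn ℂ (cauchyTransform w) {z | 0 < z.im} := by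
  intro z (hz : 0 < z.im)
  refine DifferentiableAt.differentiableWithinAt ?_
  have him_ball : ∀ x ∈ Metric.ball z (z.im / 2), z.im / 2 ≤ x.im := by
    intro x hx
    have := (abs_im_le_norm (x - z)).trans (mem_ball_iff_norm.mp hx).le
    rw [sub_im, abs_le] at this
    linarith
  have hderiv : ∀ t : ℝ, ∀ x ∈ Metric.ball z (z.im / 2), HasDerivAt
      (fun x => (w t : ℂ) * ((t : ℂ) - x)⁻¹) ((w t : ℂ) * (((t : ℂ) - x) ^ 2)⁻¹) x := by
    intro t x hx
    have hne : (t : ℂ) - x ≠ 0 := by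
      refine norm_pos_iff.mp (lt_of_lt_of_le ?_ (im_le_norm_ofReal_sub x t))
      linarith [him_ball x hx]
    simpa using (((hasDerivAt_id x).const_sub (t : ℂ)).inv hne).const_mul (w t : ℂ)
  have hbound : ∀ t : ℝ, ∀ x ∈ Metric.ball z (z.im / 2),
      ‖(w t : ℂ) * (((t : ℂ) - x) ^ 2)⁻¹‖ ≤ |w t| * ((z.im / 2) ^ 2)⁻¹ := by
    intro t x hx
    rw [norm_mul, norm_real, Real.norm_eq_abs, norm_inv, norm_pow]
    gcongr
    exact (him_ball x hx).trans (im_le_norm_ofReal_sub x t)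
  exact (hasDerivAt_integral_of_dominated_loc_of_deriv_le (Metric.ball_mem_nhds z (by positivity))
    (.of_forall fun x => hw.ofReal.aestronglyMeasurable.mul (by fun_prop))
    (integrable_mul_inv_ofReal_sub hw hz) (hw.ofReal.aestronglyMeasurable.mul (by fun_prop))
    (.of_forall hbound) (hw.abs.mul_const _) (.of_forall hderiv)).2.differentiableAt

end CauchyTransform

section PoissonIntegral

variable {w : ℝ → ℝ}

lemma integral_mul_halfPlanePoissonKernel_le {W : ℝ} (hw0 : ∀ t, 0 ≤ w t) (hwW : ∀ t, w t ≤ W)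
    {z : ℂ} (hz : 0 < z.im) : ∫ t, w t * halfPlanePoissonKernel z t ≤ π * W := by
  calc ∫ t, w t * halfPlanePoissonKernel z t
      ≤ ∫ t, W * halfPlanePoissonKernel z t := by
        refine integral_mono_of_nonneg (.of_forall fun t => ?_)
          ((integrable_halfPlanePoissonKernel hz).const_mul W) (.of_forall fun t => ?_)
        · exact mul_nonneg (hw0 t) (halfPlanePoissonKernel_nonneg hz.le t)
        · exact mul_le_mul_of_nonneg_right (hwW t) (halfPlanePoissonKernel_nonneg hz.le t)
    _ = π * W := by rw [integral_const_mul, integral_halfPlanePoissonKernel hz, mul_comm]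

lemma eventually_integral_mul_halfPlanePoissonKernel_le (hwu : UniformContinuous w)
    (hw0 : ∀ t, 0 ≤ w t) (hwi : Integrable w) {η : ℝ} (hη : 0 < η) :
    ∀ᶠ ε : ℝ in 𝓝[>] 0, ∀ t : ℝ,
      ∫ s, w s * halfPlanePoissonKernel (t + ε * I : ℂ) s ≤ π * (w t + η) := by
  obtain ⟨δ, hδ, hwδ⟩ := Metric.uniformContinuous_iff.mp hwu (η / 2) (by positivity)
  have htail : Tendsto (fun ε : ℝ => ε / δ ^ 2 * ∫ s, w s) (𝓝 0) (𝓝 0) := by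
    simpa using ((continuous_id.div_const (δ ^ 2)).mul_const (∫ s, w s)).tendsto 0
  filter_upwards [self_mem_nhdsWithin,
    nhdsWithin_le_nhds (htail.eventually (gt_mem_nhds (by positivity : 0 < π * (η / 2))))]
    with ε (hε : 0 < ε) hεtail t
  set P := halfPlanePoissonKernel (t + ε * I : ℂ)
  have hPim : (t + ε * I : ℂ).im = ε := by simp
  have hP0 : ∀ s, 0 ≤ P s := halfPlanePoissonKernel_nonneg (by rw [hPim]; exact hε.le)
  have hPi : Integrable P := integrable_halfPlanePoissonKernel (by rw [hPim]; exact hε)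
  -- Near `t` use the continuity of `w`; away from `t` the kernel is at most `ε / δ ^ 2`.
  have hsplit : ∀ s, w s * P s ≤ (w t + η / 2) * P s + ε / δ ^ 2 * w s := by
    intro s
    by_cases hs : dist s t < δ
    · have : w s ≤ w t + η / 2 := by linarith [(abs_lt.mp (hwδ hs)).2]
      nlinarith [mul_le_mul_of_nonneg_right this (hP0 s), hw0 s, div_nonneg hε.le (sq_nonneg δ)]
    · have hδs : δ ≤ |(t + ε * I : ℂ).re - s| := by simpa [← Real.dist_eq, dist_comm] using hs
      have hfar : P s ≤ ε / δ ^ 2 := by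
        simpa [hPim] using halfPlanePoissonKernel_le_of_le_abs (by rw [hPim]; exact hε.le) hδ hδs
      nlinarith [mul_le_mul_of_nonneg_left hfar (hw0 s), hP0 s, hw0 t]
  calc ∫ s, w s * P s ≤ ∫ s, ((w t + η / 2) * P s + ε / δ ^ 2 * w s) :=
        integral_mono_of_nonneg (.of_forall fun s => mul_nonneg (hw0 s) (hP0 s))
          ((hPi.const_mul _).add (hwi.const_mul _)) (.of_forall hsplit)
    _ = π * (w t + η / 2) + ε / δ ^ 2 * ∫ s, w s := by
        rw [integral_add (hPi.const_mul _) (hwi.const_mul _), integral_const_mul,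
          integral_const_mul, integral_halfPlanePoissonKernel (by rw [hPim]; exact hε), mul_comm]
    _ ≤ π * (w t + η) := by linarith

end PoissonIntegral

theorem PhragmenLindelof.upper_half_plane_of_bounded {E : Type*} [NormedAddCommGroup E]
    [NormedSpace ℂ E] {f : ℂ → E} {M C : ℝ} (hd : DiffContOnCl ℂ f {z | 0 < z.im})
    (hM : ∀ z, 0 < z.im → ‖f z‖ ≤ M) (hC : ∀ t : ℝ, ‖f t‖ ≤ C) {z : ℂ} (hz : 0 ≤ z.im) :
    ‖f z‖ ≤ C := by
  have hrot : MapsTo (· * I) {ζ : ℂ | 0 < ζ.re} {z | 0 < z.im} := fun ζ hζ => by simpa using hζ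
  have hfM : ∀ ζ : ℂ, 0 < ζ.re → ‖f (ζ * I)‖ ≤ M := fun ζ hζ => hM _ (hrot hζ)
  have := right_half_plane_of_bounded_on_real (f := fun ζ => f (ζ * I)) (z := -z * I)
    (hd.comp (differentiable_id.mul_const I).diffContOnCl hrot)
    ⟨0, two_pos, 0, .of_bound M (eventually_inf_principal.2 (.of_forall fun ζ hζ => by
      simpa using hfM ζ hζ))⟩
    (isBoundedUnder_of_eventually_le ((eventually_gt_atTop 0).mono fun s hs =>
      hfM s (by simpa using hs)))
    (fun s => by simpa [mul_assoc] using hC (-s)) (by simpa using hz)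
  simpa [mul_assoc] using this

section Majorization

variable {g : ℂ → ℂ} {M : ℝ} {w : ℝ → ℝ}

lemma norm_cexp_neg_I_mul_div_pi (F : ℂ) : ‖cexp (-I * F / π)‖ = Real.exp (F.im / π) := by
  rw [norm_exp]
  congr 1
  simp [div_ofReal_re]

lemma exp_im_cauchyTransform_mul_norm_le (hg : DiffContOnCl ℂ g {z | 0 < z.im})
    (hM : ∀ z, 0 < z.im → ‖g z‖ ≤ M) (hwi : Integrable w) (hw0 : ∀ t, 0 ≤ w t) {W : ℝ}
    (hwW : ∀ t, w t ≤ W) (hgw : ∀ t : ℝ, ‖g t‖ ≤ Real.exp (-w t)) {ε η : ℝ} (hε : 0 < ε)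
    (hbd : ∀ t : ℝ, ∫ s, w s * halfPlanePoissonKernel (t + ε * I : ℂ) s ≤ π * (w t + η))
    {z : ℂ} (hz : 0 ≤ z.im) :
    Real.exp ((cauchyTransform w (z + ε * I)).im / π) * ‖g z‖ ≤ Real.exp η := by
  set F := fun z => cauchyTransform w (z + ε * I)
  have hshift : MapsTo (· + ε * I) {z : ℂ | 0 ≤ z.im} {z | 0 < z.im} := fun z (hz : 0 ≤ z.im) => by
    simpa using add_pos_of_nonneg_of_pos hz hε
  have hFim : ∀ z, 0 ≤ z.im → (F z).im = ∫ s, w s * halfPlanePoissonKernel (z + ε * I) s :=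
    fun z hz => im_cauchyTransform hwi (hshift hz)
  have hd : DiffContOnCl ℂ (fun z => cexp (-I * F z / π) • g z) {z | 0 < z.im} := by
    refine DiffContOnCl.smul (DifferentiableOn.diffContOnCl ?_) hg
    rw [closure_setOfPred_lt_im]
    exact (((differentiableOn_cauchyTransform hwi).comp (by fun_prop) hshift).const_mul
      (-I)).div_const _ |>.cexp
  have hbounded : ∀ z, 0 < z.im → ‖cexp (-I * F z / π) • g z‖ ≤ Real.exp W * M := by
    intro z hz
    rw [norm_smul, norm_cexp_neg_I_mul_div_pi, hFim z hz.le]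
    refine mul_le_mul (Real.exp_le_exp.mpr ?_) (hM z hz) (norm_nonneg _) (Real.exp_pos _).le
    rw [div_le_iff₀' Real.pi_pos]
    exact integral_mul_halfPlanePoissonKernel_le hw0 hwW (hshift hz.le)
  have hreal : ∀ t : ℝ, ‖cexp (-I * F t / π) • g t‖ ≤ Real.exp η := by
    intro t
    rw [norm_smul, norm_cexp_neg_I_mul_div_pi, hFim t (by simp)]
    calc Real.exp ((∫ s, w s * halfPlanePoissonKernel (t + ε * I) s) / π) * ‖g t‖
        ≤ Real.exp (w t + η) * Real.exp (-w t) := by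
          gcongr
          · rw [div_le_iff₀' Real.pi_pos]; exact hbd t
          · exact hgw t
      _ = Real.exp η := by rw [← Real.exp_add]; ring_nf
  have := PhragmenLindelof.upper_half_plane_of_bounded hd hbounded hreal hz
  rwa [norm_smul, norm_cexp_neg_I_mul_div_pi] at this

theorem norm_le_exp_neg_integral_mul_halfPlanePoissonKernel (hg : DiffContOnCl ℂ g {z | 0 < z.im})
    (hM : ∀ z, 0 < z.im → ‖g z‖ ≤ M) (hwc : Continuous w) (hws : HasCompactSupport w)
    (hw0 : ∀ t, 0 ≤ w t) (hgw : ∀ t : ℝ, ‖g t‖ ≤ Real.exp (-w t)) {z : ℂ} (hz : 0 < z.im) :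
    ‖g z‖ ≤ Real.exp (-(∫ t, w t * halfPlanePoissonKernel z t) / π) := by
  obtain ⟨W, hW⟩ := hws.exists_bound_of_continuous hwc
  have hwW : ∀ t, w t ≤ W := fun t => (le_abs_self _).trans (hW t)
  have hwi : Integrable w := hwc.integrable_of_hasCompactSupport hws
  set F := cauchyTransform w
  set A := Real.exp ((F z).im / π) * ‖g z‖ with hAdef
  have hFz : ContinuousAt F z := ((differentiableOn_cauchyTransform hwi).differentiableAt
    ((isOpen_lt continuous_const continuous_im).mem_nhds hz)).continuousAt
  have hA : ∀ η > 0, A ≤ Real.exp η := by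
    intro η hη
    have hshift : Tendsto (fun ε : ℝ => z + ε * I) (𝓝 0) (𝓝 z) := by
      simpa using (continuous_const.add (continuous_ofReal.mul continuous_const)).tendsto
        (0 : ℝ) (f := fun ε : ℝ => z + ε * I)
    have hlim : Tendsto (fun ε : ℝ => Real.exp ((F (z + ε * I)).im / π) * ‖g z‖) (𝓝[>] 0)
        (𝓝 A) :=
      (((continuous_im.tendsto _).comp (hFz.tendsto.comp hshift)).div_const π).rexp.mul_const
        _ |>.mono_left nhdsWithin_le_nhds
    refine le_of_tendsto hlim ?_
    filter_upwards [self_mem_nhdsWithin, eventually_integral_mul_halfPlanePoissonKernel_le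
      (hws.uniformContinuous_of_continuous hwc) hw0 hwi hη] with ε hε hbd
    exact exp_im_cauchyTransform_mul_norm_le hg hM hwi hw0 hwW hgw hε hbd hz.le
  have hA1 : A ≤ 1 := by
    refine ge_of_tendsto (x := 𝓝[>] (0 : ℝ)) ?_ (eventually_nhdsWithin_of_forall hA)
    simpa using Real.continuous_exp.tendsto (0 : ℝ) |>.mono_left nhdsWithin_le_nhds
  calc ‖g z‖ = A * Real.exp (-(∫ t, w t * halfPlanePoissonKernel z t) / π) := by
        rw [hAdef, im_cauchyTransform hwi hz, mul_comm, ← mul_assoc, ← Real.exp_add, neg_div,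
          neg_add_cancel, Real.exp_zero, one_mul]
    _ ≤ Real.exp (-(∫ t, w t * halfPlanePoissonKernel z t) / π) :=
        mul_le_of_le_one_left (Real.exp_pos _).le hA1

end Majorization

section NegLogApprox

/-- `min n (-log r)` for `r > 0`, and `n` for `r = 0`. -/
def truncNegLog (n : ℕ) (r : ℝ) : ℝ := -Real.log (max r (Real.exp (-n)))

lemma max_exp_neg_pos (n : ℕ) (r : ℝ) : 0 < max r (Real.exp (-n)) :=
  lt_max_of_lt_right (Real.exp_pos _)

lemma truncNegLog_nonneg {r : ℝ} (hr : r ≤ 1) (n : ℕ) : 0 ≤ truncNegLog n r :=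
  neg_nonneg.mpr <| Real.log_nonpos (max_exp_neg_pos n r).le <|
    max_le hr (Real.exp_le_one_iff.mpr (by simp))

lemma le_exp_neg_truncNegLog (n : ℕ) (r : ℝ) : r ≤ Real.exp (-truncNegLog n r) := by
  rw [truncNegLog, neg_neg, Real.exp_log (max_exp_neg_pos n r)]
  exact le_max_left _ _

lemma monotone_truncNegLog (r : ℝ) : Monotone (truncNegLog · r) := fun m n hmn => by
  refine neg_le_neg (Real.log_le_log (max_exp_neg_pos n r) (max_le_max le_rfl ?_))
  exact Real.exp_le_exp.mpr (by simpa using hmn)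

lemma continuous_truncNegLog (n : ℕ) : Continuous (truncNegLog n) :=
  ((continuous_id.max continuous_const).log fun r => (max_exp_neg_pos n r).ne').neg

lemma iSup_ofReal_truncNegLog {r : ℝ} (hr : 0 ≤ r) :
    ⨆ n : ℕ, ENNReal.ofReal (truncNegLog n r) = negLog r := by
  rcases hr.eq_or_lt with rfl | hr
  · simp [negLog, truncNegLog, max_eq_right (Real.exp_pos _).le, ENNReal.iSup_natCast]
  rw [negLog, if_neg hr.ne']
  refine le_antisymm (iSup_le fun n => ENNReal.ofReal_le_ofReal ?_)
    (le_iSup_of_le ⌈-Real.log r⌉₊ ?_)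
  · exact neg_le_neg (Real.log_le_log hr (le_max_left _ _))
  · refine ENNReal.ofReal_le_ofReal (neg_le_neg (Real.log_le_log (max_exp_neg_pos _ r) ?_))
    refine max_le le_rfl ((Real.exp_le_exp.mpr ?_).trans_eq (Real.exp_log hr))
    linarith [Nat.le_ceil (-Real.log r)]

def plateau (n : ℕ) (t : ℝ) : ℝ := max 0 (min 1 (n + 1 - |t|))

lemma plateau_nonneg (n : ℕ) (t : ℝ) : 0 ≤ plateau n t := le_max_left _ _

lemma plateau_le_one (n : ℕ) (t : ℝ) : plateau n t ≤ 1 := max_le zero_le_one (min_le_left _ _)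

lemma plateau_eq_one {n : ℕ} {t : ℝ} (ht : |t| ≤ n) : plateau n t = 1 := by
  rw [plateau, min_eq_left (by linarith), max_eq_right zero_le_one]

lemma continuous_plateau (n : ℕ) : Continuous (plateau n) := by
  unfold plateau; fun_prop

lemma hasCompactSupport_plateau (n : ℕ) : HasCompactSupport (plateau n) := by
  refine .intro (isCompact_Icc (a := -(n + 1 : ℝ)) (b := n + 1)) fun t ht => ?_
  have : (n + 1 : ℝ) < |t| := by
    rw [mem_Icc, not_and_or, not_le, not_le] at ht
    rcases ht with ht | ht
    · linarith [neg_le_abs t]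
    · linarith [le_abs_self t]
  rw [plateau, min_eq_right (by linarith), max_eq_left (by linarith)]

variable {r : ℝ → ℝ}

def negLogApprox (r : ℝ → ℝ) (n : ℕ) (t : ℝ) : ℝ := truncNegLog n (r t) * plateau n t

lemma negLogApprox_nonneg (hr1 : ∀ t, r t ≤ 1) (n : ℕ) (t : ℝ) : 0 ≤ negLogApprox r n t :=
  mul_nonneg (truncNegLog_nonneg (hr1 t) n) (plateau_nonneg n t)

lemma negLogApprox_le_truncNegLog (hr1 : ∀ t, r t ≤ 1) (n : ℕ) (t : ℝ) :
    negLogApprox r n t ≤ truncNegLog n (r t) :=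
  mul_le_of_le_one_right (truncNegLog_nonneg (hr1 t) n) (plateau_le_one n t)

lemma le_exp_neg_negLogApprox (hr1 : ∀ t, r t ≤ 1) (n : ℕ) (t : ℝ) :
    r t ≤ Real.exp (-negLogApprox r n t) :=
  (le_exp_neg_truncNegLog n (r t)).trans
    (Real.exp_le_exp.mpr (neg_le_neg (negLogApprox_le_truncNegLog hr1 n t)))

lemma monotone_negLogApprox (hr1 : ∀ t, r t ≤ 1) (t : ℝ) : Monotone (negLogApprox r · t) := by
  intro m n hmn
  refine mul_le_mul (monotone_truncNegLog (r t) hmn) ?_ (plateau_nonneg m t)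
    (truncNegLog_nonneg (hr1 t) n)
  exact max_le_max le_rfl (min_le_min le_rfl (by gcongr))

lemma continuous_negLogApprox (hr : Continuous r) (n : ℕ) : Continuous (negLogApprox r n) :=
  ((continuous_truncNegLog n).comp hr).mul (continuous_plateau n)

lemma hasCompactSupport_negLogApprox (n : ℕ) : HasCompactSupport (negLogApprox r n) :=
  (hasCompactSupport_plateau n).mul_left

lemma iSup_ofReal_negLogApprox (hr0 : ∀ t, 0 ≤ r t) (hr1 : ∀ t, r t ≤ 1) (t : ℝ) :
    ⨆ n : ℕ, ENNReal.ofReal (negLogApprox r n t) = negLog (r t) := by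
  rw [← iSup_ofReal_truncNegLog (hr0 t)]
  refine le_antisymm (iSup_mono fun n => ENNReal.ofReal_le_ofReal
    (negLogApprox_le_truncNegLog hr1 n t)) (iSup_le fun n => ?_)
  set N := max n ⌈|t|⌉₊
  refine le_iSup_of_le N (ENNReal.ofReal_le_ofReal ?_)
  rw [negLogApprox, plateau_eq_one ((Nat.le_ceil _).trans (by simp [N])), mul_one]
  exact monotone_truncNegLog (r t) (le_max_left _ _)

lemma lintegral_mul_negLog_eq_iSup (hr : Continuous r) (hr0 : ∀ t, 0 ≤ r t)
    (hr1 : ∀ t, r t ≤ 1) {f : ℝ → ℝ≥0∞} (hf : Measurable f) :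
    ∫⁻ t, f t * negLog (r t) = ⨆ n : ℕ, ∫⁻ t, f t * ENNReal.ofReal (negLogApprox r n t) := by
  simp_rw [← iSup_ofReal_negLogApprox hr0 hr1, ENNReal.mul_iSup]
  refine lintegral_iSup (fun n => hf.mul (continuous_negLogApprox hr n).measurable.ennreal_ofReal)
    fun m n hmn t => ?_
  exact mul_le_mul_right (ENNReal.ofReal_le_ofReal (monotone_negLogApprox hr1 t hmn)) _

end NegLogApprox

theorem lintegral_halfPlanePoissonKernel_mul_negLog_le {g : ℂ → ℂ}
    (hg : DiffContOnCl ℂ g {z | 0 < z.im}) (hb : ∀ z : ℂ, 0 ≤ z.im → ‖g z‖ ≤ 1) {z : ℂ}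
    (hz : 0 < z.im) (hgz : g z ≠ 0) :
    ∫⁻ t, ENNReal.ofReal (halfPlanePoissonKernel z t) * negLog ‖g t‖
      ≤ ENNReal.ofReal (-Real.log ‖g z‖ * π) := by
  have hr : Continuous fun t : ℝ => ‖g t‖ := (hg.continuousOn.comp_continuous continuous_ofReal
    fun t => by simp [closure_setOfPred_lt_im]).norm
  have hr1 : ∀ t : ℝ, ‖g t‖ ≤ 1 := fun t => hb t (by simp)
  rw [lintegral_mul_negLog_eq_iSup hr (fun _ => norm_nonneg _) hr1
    (continuous_halfPlanePoissonKernel hz).measurable.ennreal_ofReal]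
  refine iSup_le fun n => ?_
  set w := negLogApprox (fun t => ‖g t‖) n
  have hwc : Continuous w := continuous_negLogApprox hr n
  have hw0 : ∀ t, 0 ≤ w t := negLogApprox_nonneg hr1 n
  have hmaj := norm_le_exp_neg_integral_mul_halfPlanePoissonKernel hg (fun z hz => hb z hz.le)
    hwc (hasCompactSupport_negLogApprox n) hw0 (le_exp_neg_negLogApprox hr1 n) hz
  rw [← Real.log_le_iff_le_exp (norm_pos_iff.mpr hgz), le_div_iff₀ Real.pi_pos] at hmaj
  have hint : Integrable fun t => w t * halfPlanePoissonKernel z t :=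
    (hwc.mul (continuous_halfPlanePoissonKernel hz)).integrable_of_hasCompactSupport
      (hasCompactSupport_negLogApprox n).mul_right
  calc ∫⁻ t, ENNReal.ofReal (halfPlanePoissonKernel z t) * ENNReal.ofReal (w t)
      = ENNReal.ofReal (∫ t, w t * halfPlanePoissonKernel z t) := by
        rw [ofReal_integral_eq_lintegral_ofReal hint (.of_forall fun t =>
          mul_nonneg (hw0 t) (halfPlanePoissonKernel_nonneg hz.le t))]
        refine lintegral_congr fun t => ?_
        rw [← ENNReal.ofReal_mul (halfPlanePoissonKernel_nonneg hz.le t), mul_comm]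
    _ ≤ ENNReal.ofReal (-Real.log ‖g z‖ * π) := ENNReal.ofReal_le_ofReal (by linarith)

end

/-- **Poisson integral majorization on the upper half plane.**
If `g` is entire with `|g| ≤ 1` on the closed upper half plane, then for `x ∈ ℝ`,
`y > 0` we have `log|g(x+iy)| ≤ (1/π) ∫_ℝ y log|g(t)| / (y² + (x−t)²) dt`, both
sides lying in `[-∞, 0]`.  This is expressed equivalently, after negating both
sides, as an inequality in `[0, ∞]`. -/
theorem poisson_majorization_stmt11
    (g : ℂ → ℂ) (hg : Differentiable ℂ g)
    (hb : ∀ z : ℂ, 0 ≤ z.im → ‖g z‖ ≤ 1) :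
    ∀ x y : ℝ, 0 < y →
      (∫⁻ t : ℝ, ENNReal.ofReal (y / (y ^ 2 + (x - t) ^ 2)) * negLog ‖g t‖)
          / ENNReal.ofReal Real.pi
        ≤ negLog ‖g ((x : ℂ) + (y : ℂ) * Complex.I)‖ := by
  intro x y hy
  set z : ℂ := x + y * I
  have hz : 0 < z.im := by simpa [z] using hy
  by_cases hgz : g z = 0
  · simp [negLog, hgz]
  have hkernel : ∀ t : ℝ, y / (y ^ 2 + (x - t) ^ 2) = halfPlanePoissonKernel z t := by
    simp [halfPlanePoissonKernel, z]
  rw [negLog, if_neg (norm_ne_zero_iff.mpr hgz), ENNReal.div_le_iff (by simp [Real.pi_pos])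
    ENNReal.ofReal_ne_top, ← ENNReal.ofReal_mul (neg_nonneg.mpr (Real.log_nonpos (norm_nonneg _)
    (hb z hz.le)))]
  simpa only [hkernel] using
    lintegral_halfPlanePoissonKernel_mul_negLog_le hg.diffContOnCl hb hz hgz
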